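/- With the notation of the previous setup (η₁, η₂, η₃ distinct unimodular, 0 < |λ| < 1, b₁, b₂, b₃ unimodular, B₀, B_λ nonzero, and x₄,…,y₆ defined accordingly), one has (s₄(y₅x₆ − x₅y₆) + s₅(x₄y₆ − y₄x₆))/(x₄y₅ − y₄x₅) = (1/(η₃ − η₂))·( s₄·conj(b₃/b₁)·(η₁ − η₂) + s₅·conj(b₂/b₁)·(η₃ − η₁) ) for all s₄, s₅ ∈ ℂ. -/

import Mathlib

open scoped ComplexConjugate

/-!
Write `dᵢ = 1 - conj λ · ηᵢ`, which does not vanish since `|conj λ · ηᵢ| = |λ| < 1`.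
Each of the three `2 × 2` minors in the quotient pairs two entries sharing one index `i`, and
the other two indices `j, k` enter only through `1 / dⱼ - 1 / dₖ = conj λ (ηⱼ - ηₖ) / (dⱼ dₖ)`.
So every minor is the common factor `conj (b₁ b₂ b₃) B₀² B_λ² conj λ / (d₁ d₂ d₃)` times
`conj bᵢ (ηⱼ - ηₖ)`, up to sign, and the common factor cancels in the quotient.
-/

theorem one_sub_mul_ne_zero_of_norm_lt_one {K : Type*} [NormedDivisionRing K] {a η : K}
    (ha : ‖a‖ < 1) (hη : ‖η‖ = 1) : 1 - a * η ≠ 0 := by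
  refine sub_ne_zero.mpr fun h => ?_
  have := congrArg norm h
  rw [norm_one, norm_mul, hη, mul_one] at this
  exact ha.ne' this

theorem stmt8_general
    (η₁ η₂ η₃ : ℂ)
    (hη₁ : ‖η₁‖ = 1) (hη₂ : ‖η₂‖ = 1)
    (hη₃ : ‖η₃‖ = 1)
    (h23 : η₂ ≠ η₃)
    (lam : ℂ) (hlam0 : 0 < ‖lam‖) (hlam1 : ‖lam‖ < 1)
    (b₁ b₂ b₃ : ℂ)
    (hb₁ : ‖b₁‖ = 1) (hb₂ : ‖b₂‖ = 1)
    (hb₃ : ‖b₃‖ = 1)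
    (B₀ Blam : ℂ) (hB₀ : B₀ ≠ 0) (hBlam : Blam ≠ 0)
    (x₄ x₅ x₆ y₄ y₅ y₆ : ℂ)
    (hx₄ : x₄ = conj (b₂ * b₁) * B₀ ^ 2)
    (hx₅ : x₅ = conj (b₃ * b₁) * B₀ ^ 2)
    (hx₆ : x₆ = conj (b₃ * b₂) * B₀ ^ 2)
    (hy₄ : y₄ = conj (b₂ * b₁) * Blam ^ 2 /
        ((1 - conj lam * η₂) * (1 - conj lam * η₁)))
    (hy₅ : y₅ = conj (b₃ * b₁) * Blam ^ 2 /
        ((1 - conj lam * η₃) * (1 - conj lam * η₁)))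
    (hy₆ : y₆ = conj (b₃ * b₂) * Blam ^ 2 /
        ((1 - conj lam * η₃) * (1 - conj lam * η₂))) :
    ∀ s₄ s₅ : ℂ,
      (s₄ * (y₅ * x₆ - x₅ * y₆) + s₅ * (x₄ * y₆ - y₄ * x₆)) /
          (x₄ * y₅ - y₄ * x₅) =
        (1 / (η₃ - η₂)) *
          (s₄ * conj (b₃ / b₁) * (η₁ - η₂) + s₅ * conj (b₂ / b₁) * (η₃ - η₁)) := by
  intro s₄ s₅
  have hd : ∀ η : ℂ, ‖η‖ = 1 → 1 - conj lam * η ≠ 0 := fun η =>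
    one_sub_mul_ne_zero_of_norm_lt_one (by rwa [Complex.norm_conj])
  have hb : ∀ b : ℂ, ‖b‖ = 1 → conj b ≠ 0 := fun b h =>
    (map_ne_zero _).mpr (norm_ne_zero_iff.mp (by simp [h]))
  have := hd η₁ hη₁; have := hd η₂ hη₂; have := hd η₃ hη₃
  have := hb b₁ hb₁; have := hb b₂ hb₂; have := hb b₃ hb₃
  have : conj lam ≠ 0 := (map_ne_zero conj).mpr (norm_pos_iff.mp hlam0)
  have : η₃ - η₂ ≠ 0 := sub_ne_zero.mpr h23.symm
  set M := conj b₁ * conj b₂ * conj b₃ * B₀ ^ 2 * Blam ^ 2 * conj lam /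
    ((1 - conj lam * η₁) * (1 - conj lam * η₂) * (1 - conj lam * η₃)) with hM
  have hM0 : M ≠ 0 := by positivity
  have hden : x₄ * y₅ - y₄ * x₅ = M * (conj b₁ * (η₃ - η₂)) := by
    subst hx₄ hx₅ hy₄ hy₅
    simp only [hM, map_mul]
    field_simp
    ring
  have hnum : s₄ * (y₅ * x₆ - x₅ * y₆) + s₅ * (x₄ * y₆ - y₄ * x₆) =
      M * (s₄ * conj b₃ * (η₁ - η₂) + s₅ * conj b₂ * (η₃ - η₁)) := by
    subst hx₄ hx₅ hx₆ hy₄ hy₅ hy₆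
    simp only [hM, map_mul]
    field_simp
    ring
  rw [hden, hnum, mul_div_mul_left _ _ hM0, map_div₀, map_div₀]
  field_simp

/-- With the Clark-point data, the quotient
`(s₄(y₅x₆ − x₅y₆) + s₅(x₄y₆ − y₄x₆))/(x₄y₅ − y₄x₅)` simplifies to
`(1/(η₃ − η₂))·(s₄·conj(b₃/b₁)·(η₁ − η₂) + s₅·conj(b₂/b₁)·(η₃ − η₁))`. -/
theorem stmt8
    (η₁ η₂ η₃ : ℂ)
    (hη₁ : ‖η₁‖ = 1) (hη₂ : ‖η₂‖ = 1)
    (hη₃ : ‖η₃‖ = 1)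
    (h12 : η₁ ≠ η₂) (h13 : η₁ ≠ η₃) (h23 : η₂ ≠ η₃)
    (lam : ℂ) (hlam0 : 0 < ‖lam‖) (hlam1 : ‖lam‖ < 1)
    (b₁ b₂ b₃ : ℂ)
    (hb₁ : ‖b₁‖ = 1) (hb₂ : ‖b₂‖ = 1)
    (hb₃ : ‖b₃‖ = 1)
    (B₀ Blam : ℂ) (hB₀ : B₀ ≠ 0) (hBlam : Blam ≠ 0)
    (x₄ x₅ x₆ y₄ y₅ y₆ : ℂ)
    (hx₄ : x₄ = conj (b₂ * b₁) * B₀ ^ 2)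
    (hx₅ : x₅ = conj (b₃ * b₁) * B₀ ^ 2)
    (hx₆ : x₆ = conj (b₃ * b₂) * B₀ ^ 2)
    (hy₄ : y₄ = conj (b₂ * b₁) * Blam ^ 2 /
        ((1 - conj lam * η₂) * (1 - conj lam * η₁)))
    (hy₅ : y₅ = conj (b₃ * b₁) * Blam ^ 2 /
        ((1 - conj lam * η₃) * (1 - conj lam * η₁)))
    (hy₆ : y₆ = conj (b₃ * b₂) * Blam ^ 2 /
        ((1 - conj lam * η₃) * (1 - conj lam * η₂))) :
    ∀ s₄ s₅ : ℂ,
      (s₄ * (y₅ * x₆ - x₅ * y₆) + s₅ * (x₄ * y₆ - y₄ * x₆)) /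
          (x₄ * y₅ - y₄ * x₅) =
        (1 / (η₃ - η₂)) *
          (s₄ * conj (b₃ / b₁) * (η₁ - η₂) + s₅ * conj (b₂ / b₁) * (η₃ - η₁)) :=
  stmt8_general η₁ η₂ η₃ hη₁ hη₂ hη₃ h23 lam hlam0 hlam1 b₁ b₂ b₃ hb₁ hb₂ hb₃ B₀ Blam hB₀ hBlam x₄
    x₅ x₆ y₄ y₅ y₆ hx₄ hx₅ hx₆ hy₄ hy₅ hy₆
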